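/- Let A be a Hom-associative algebra with bimodule M, and with the derived bracket ⟦P,Q⟧_α := (−1)^m [[μ+l+r, P]_α, Q]_α on C•_α(M,A) = ⊕_{n≥0} Hom(M^⊗n, A). For T, T' ∈ Hom(M,A): ⟦T,T'⟧_α(u,v) = T(T'(u)v) + T(uT'(v)) + T'(T(u)v) + T'(uT(v)) − T(u)·T'(v) − T'(u)·T(v). Consequently a linear map T: M → A (with Tφ = αT) is an O-operator if and only if ⟦T,T⟧_α = 0. -/
import Mathlib

section

variable {V : Type*} [AddCommGroup V]

/-- Twisted Gerstenhaber circle product (cochains encoded on sequences). -/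
def gcomp (β : V → V) (m n : ℕ) (f g : (ℕ → V) → V) : (ℕ → V) → V :=
  fun a => ∑ i ∈ Finset.range m, ((-1 : ℤ)) ^ (i * (n - 1)) •
    f (fun j => if j < i then β^[n - 1] (a j)
        else if j = i then g (fun t => a (i + t))
        else β^[n - 1] (a (j + (n - 1))))

/-- Gerstenhaber bracket. -/
def gbracket (β : V → V) (m n : ℕ) (f g : (ℕ → V) → V) : (ℕ → V) → V :=
  fun a => gcomp β m n f g a - ((-1 : ℤ)) ^ ((m - 1) * (n - 1)) • gcomp β n m g f a

end

section

variable {K A M : Type*} [Field K] [AddCommGroup A] [Module K A]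
  [AddCommGroup M] [Module K M]

/-- The lift `μ + l + r` as a 2-cochain on `V = A ⊕ M`. -/
def mlr (μ : A →ₗ[K] A →ₗ[K] A) (l : A →ₗ[K] M →ₗ[K] M)
    (r : M →ₗ[K] A →ₗ[K] M) : (ℕ → A × M) → A × M :=
  fun a => (μ (a 0).1 (a 1).1, l (a 0).1 (a 1).2 + r (a 0).2 (a 1).1)

/-- The structure map `α + φ` on `V = A ⊕ M`. -/
def sdβ (α : A →ₗ[K] A) (φ : M →ₗ[K] M) : A × M → A × M :=
  fun p => (α p.1, φ p.2)

/-- The lift of `T : M → A` as a 1-cochain on `V = A ⊕ M`. -/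
def liftT (T : M →ₗ[K] A) : (ℕ → A × M) → A × M :=
  fun a => (T ((a 0).2), (0 : M))

/-- The derived bracket `⟦P,Q⟧_α = (−1)^m [[μ+l+r, P]_α, Q]_α` for two
1-cochains `P, Q ∈ Hom(M,A)`. -/
def dbracket (μ : A →ₗ[K] A →ₗ[K] A) (α : A →ₗ[K] A)
    (l : A →ₗ[K] M →ₗ[K] M) (r : M →ₗ[K] A →ₗ[K] M) (φ : M →ₗ[K] M)
    (T T' : M →ₗ[K] A) : (ℕ → A × M) → A × M :=
  fun a => -(gbracket (sdβ α φ) 2 1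
      (gbracket (sdβ α φ) 2 1 (mlr μ l r) (liftT T)) (liftT T') a)

/-- for `T, T' ∈ Hom(M,A)`, the derived bracket satisfies
`⟦T,T'⟧(u,v) = T(T'(u)v) + T(uT'(v)) + T'(T(u)v) + T'(uT(v)) − T(u)·T'(v) − T'(u)·T(v)`;
consequently, a linear map `T` with `Tφ = αT` is an `𝒪`-operator iff
`⟦T,T⟧_α = 0`. -/
theorem stmt_13 (h2 : (2 : K) ≠ 0)
    (μ : A →ₗ[K] A →ₗ[K] A) (α : A →ₗ[K] A)
    (l : A →ₗ[K] M →ₗ[K] M) (r : M →ₗ[K] A →ₗ[K] M) (φ : M →ₗ[K] M)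
    (hassoc : ∀ a b c : A, μ (α a) (μ b c) = μ (μ a b) (α c))
    (hmult : ∀ a b : A, α (μ a b) = μ (α a) (α b))
    (hb1 : ∀ x v, φ (l x v) = l (α x) (φ v))
    (hb2 : ∀ v x, φ (r v x) = r (φ v) (α x))
    (hb3 : ∀ x y v, l (μ x y) (φ v) = l (α x) (l y v))
    (hb4 : ∀ v x y, r (φ v) (μ x y) = r (r v x) (α y))
    (hb5 : ∀ x v y, l (α x) (r v y) = r (l x v) (α y))
    (T T' : M →ₗ[K] A)
    (hTφ : ∀ u, T (φ u) = α (T u)) (hT'φ : ∀ u, T' (φ u) = α (T' u)) :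
    (∀ w : ℕ → M,
      dbracket μ α l r φ T T' (fun i => ((0 : A), w i)) =
        (T (l (T' (w 0)) (w 1)) + T (r (w 0) (T' (w 1)))
          + T' (l (T (w 0)) (w 1)) + T' (r (w 0) (T (w 1)))
          - μ (T (w 0)) (T' (w 1)) - μ (T' (w 0)) (T (w 1)), (0 : M))) ∧
    ((∀ u v : M, μ (T u) (T v) = T (l (T u) v + r u (T v))) ↔
      (∀ w : ℕ → M,
        dbracket μ α l r φ T T (fun i => ((0 : A), w i)) = 0)) := by
  have key : ∀ (T T' : M →ₗ[K] A) (w : ℕ → M),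
      dbracket μ α l r φ T T' (fun i => ((0 : A), w i)) =
        (T (l (T' (w 0)) (w 1)) + T (r (w 0) (T' (w 1)))
          + T' (l (T (w 0)) (w 1)) + T' (r (w 0) (T (w 1)))
          - μ (T (w 0)) (T' (w 1)) - μ (T' (w 0)) (T (w 1)), (0 : M)) := by
    intro T T' w
    simp [dbracket, gbracket, gcomp, mlr, liftT, sdβ, Finset.sum_range_succ,
      Prod.ext_iff]
    abel
  refine ⟨key T T', ?_, ?_⟩
  · intro hO w
    rw [key]
    have h1 := hO (w 0) (w 1)
    have h2 := hO (w 1) (w 0)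
    simp only [map_add] at h1 h2
    rw [Prod.ext_iff]
    refine ⟨?_, rfl⟩
    simp only [Prod.fst_zero]
    linear_combination (norm := abel) -h1 - h1
  · intro h u v
    set w : ℕ → M := fun i => if i = 0 then u else v with hw
    have this1 := h w
    rw [key] at this1
    have e0 : w 0 = u := rfl
    have e1 : w 1 = v := rfl
    rw [e0, e1, Prod.ext_iff] at this1
    simp only [Prod.fst_zero] at this1
    have h3 : (2 : K) • (T (l (T u) v) + T (r u (T v)) - μ (T u) (T v)) = 0 := by
      rw [two_smul]
      linear_combination (norm := abel) this1.1
    rcases smul_eq_zero.mp h3 with h4 | h4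
    · exact absurd h4 h2
    · simp only [map_add]
      linear_combination (norm := abel) -h4

end
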